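/- Let F = FractionRing (MvPolynomial (Fin 4) ℚ), with Z₁, Z₂, Z₃, Z₄ ∈ F the images of the four polynomial variables, and let q = X be the variable of RatFunc F. Define H ∈ RatFunc F by H = (1/(4·q·(Z₄² − q²)))·∑_{a=1}^{3} (1/(2·Z_b²·Z_c²·q²))·( 1/(Z_a−q)² + 1/(Z_a+q)² ), where for each a the indices b, c are determined by {b,c} = {1,2,3}∖{a}. Then the coefficient at −1 (the residue at q = 0) of the image of H under the canonical embedding of RatFunc F into LaurentSeries F equals (3/(4·Z₁²·Z₂²·Z₃²·Z₄²))·(Z₁^{−2} + Z₂^{−2} + Z₃^{−2} + Z₄^{−2}). -/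

import Mathlib

/-!
Each of the three summands of the integrand has a pole of order three at `q = 0`. Subtracting its
principal part `α q⁻³ + β q⁻¹` leaves a quotient of polynomials whose denominator does not vanish
at `0`; its Laurent expansion is a power series, so the residue of the summand is `β`. Adding the
three values of `β` gives the claimed symmetric expression.
-/

open scoped LaurentSeries

noncomputable section

/-- The field of rational functions in four (transcendental) variables. -/
abbrev F4 : Type := FractionRing (MvPolynomial (Fin 4) ℚ)

/-- The images `Z₁, Z₂, Z₃, Z₄` of the polynomial variables in `F4`,
as constants of `RatFunc F4`. -/
def Z4 (i : Fin 4) : RatFunc F4 :=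
  RatFunc.C (algebraMap (MvPolynomial (Fin 4) ℚ) F4 (MvPolynomial.X i))

/-- The image of the `i`-th variable in `F4`. -/
def ZF (i : Fin 4) : F4 := algebraMap (MvPolynomial (Fin 4) ℚ) F4 (MvPolynomial.X i)

namespace RatFunc
variable {K : Type*} [Field K]

theorem coe_C (a : K) : ((C a : RatFunc K) : K⸨X⸩) = HahnSeries.C a := by
  rw [← algebraMap_C, ← IsScalarTower.algebraMap_apply, Polynomial.algebraMap_hahnSeries_apply,
    Polynomial.coe_C, HahnSeries.ofPowerSeries_C]

theorem coe_C_mul_X_inv_pow (a : K) (n : ℕ) :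
    ((C a * X⁻¹ ^ n : RatFunc K) : K⸨X⸩) = HahnSeries.single (-n : ℤ) a := by
  rw [map_mul, map_pow, map_inv₀, coe_X, HahnSeries.inv_single, inv_one, HahnSeries.single_pow,
    coe_C, HahnSeries.C_apply, HahnSeries.single_mul_single]
  simp

theorem coe_algebraMap_div_algebraMap {P Q : Polynomial K} (hQ : Q.coeff 0 ≠ 0) :
    ((algebraMap _ (RatFunc K) P / algebraMap _ (RatFunc K) Q : RatFunc K) : K⸨X⸩)
      = (((P : PowerSeries K) * (Q : PowerSeries K)⁻¹ : PowerSeries K) : K⸨X⸩) := by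
  have hQ_unit : PowerSeries.constantCoeff (Q : PowerSeries K) ≠ 0 := by
    rwa [Polynomial.constantCoeff_coe]
  have hQ_ne : ((Q : PowerSeries K) : K⸨X⸩) ≠ 0 := by
    rw [coe_coe]
    exact (map_ne_zero _).2 (algebraMap_ne_zero (by rintro rfl; simp at hQ))
  rw [algebraMap_apply_div, Polynomial.algebraMap_hahnSeries_apply,
    Polynomial.algebraMap_hahnSeries_apply, div_eq_iff hQ_ne, ← PowerSeries.coe_mul, mul_assoc,
    PowerSeries.inv_mul_cancel _ hQ_unit, mul_one]

theorem coeff_coe_algebraMap_div_algebraMap_of_neg {P Q : Polynomial K} (hQ : Q.coeff 0 ≠ 0)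
    {n : ℤ} (hn : n < 0) :
    ((algebraMap _ (RatFunc K) P / algebraMap _ (RatFunc K) Q : RatFunc K) : K⸨X⸩).coeff n
      = 0 := by
  rw [coe_algebraMap_div_algebraMap hQ, PowerSeries.coeff_coe, if_pos hn]

theorem C_sub_X_ne_zero (a : K) : (C a - X : RatFunc K) ≠ 0 := by
  rw [← algebraMap_C, ← algebraMap_X, ← map_sub]
  exact algebraMap_ne_zero fun h => Polynomial.X_sub_C_ne_zero a (by rw [← neg_sub, h, neg_zero])

theorem C_add_X_ne_zero (a : K) : (C a + X : RatFunc K) ≠ 0 := by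
  rw [← algebraMap_C, ← algebraMap_X, ← map_add, add_comm]
  exact algebraMap_ne_zero (Polynomial.X_add_C_ne_zero a)

theorem C_sq_sub_X_sq_ne_zero (a : K) : (C a ^ 2 - X ^ 2 : RatFunc K) ≠ 0 := by
  rw [sq_sub_sq, mul_comm]
  exact mul_ne_zero (C_sub_X_ne_zero a) (C_add_X_ne_zero a)

end RatFunc

open RatFunc

section AiryTerm
variable {K : Type*} [Field K]

/-- The terms of the recursion sum splitting `{z_a, z_b, z_c}` into `{z_a}` and `{z_b, z_c}` (in
both orders), with `u = z_a`, `v = z₄` and `q = X`: the factors `1 / (C u ∓ X) ^ 2` are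
`B(z_a, ±q)`. -/
def airyTerm (u b c v : K) : RatFunc K :=
  1 / (4 * X * (C v ^ 2 - X ^ 2)) *
    (1 / (2 * C b ^ 2 * C c ^ 2 * X ^ 2) * (1 / (C u - X) ^ 2 + 1 / (C u + X) ^ 2))

theorem exists_airyTerm_eq_principalPart_add (h2 : (2 : K) ≠ 0) {u b c v : K}
    (hu : u ≠ 0) (hb : b ≠ 0) (hc : c ≠ 0) (hv : v ≠ 0) :
    ∃ P Q : Polynomial K, Q.coeff 0 ≠ 0 ∧ airyTerm u b c v
      = C (1 / (4 * b ^ 2 * c ^ 2 * u ^ 2 * v ^ 2)) * X⁻¹ ^ 3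
        + C ((3 * v ^ 2 + u ^ 2) / (4 * u ^ 4 * b ^ 2 * c ^ 2 * v ^ 4)) * X⁻¹
        + algebraMap _ _ P / algebraMap _ _ Q := by
  have h4 : (4 : K) ≠ 0 := by
    rw [show (4 : K) = 2 * 2 by norm_num]; exact mul_ne_zero h2 h2
  -- The `X⁻¹`-coefficient is the `q²`-coefficient of `(1/v² + q²/v⁴ + …) (2/u² + 6q²/u⁴ + …)`,
  -- divided by `8b²c²`.
  refine ⟨Polynomial.C (5 * u ^ 2 * v ^ 4 + 3 * u ^ 4 * v ^ 2 + u ^ 6) * Polynomial.X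
      - Polynomial.C (3 * v ^ 4 + 6 * u ^ 2 * v ^ 2 + 2 * u ^ 4) * Polynomial.X ^ 3
      + Polynomial.C (3 * v ^ 2 + u ^ 2) * Polynomial.X ^ 5,
    Polynomial.C (4 * u ^ 4 * b ^ 2 * c ^ 2 * v ^ 4) *
      (Polynomial.C v ^ 2 - Polynomial.X ^ 2) * (Polynomial.C u ^ 2 - Polynomial.X ^ 2) ^ 2,
    by simp [Polynomial.coeff_zero_eq_eval_zero, h4, hu, hb, hc, hv], ?_⟩
  have hC {a : K} (ha : a ≠ 0) : (C a : RatFunc K) ≠ 0 := (map_ne_zero C).2 ha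
  have := hC hu; have := hC hb; have := hC hc; have := hC hv
  have : (2 : RatFunc K) ≠ 0 := by rw [← map_ofNat C 2]; exact hC h2
  have := C_sub_X_ne_zero u; have := C_add_X_ne_zero u
  have := C_sq_sub_X_sq_ne_zero u; have := C_sq_sub_X_sq_ne_zero v
  have : (X : RatFunc K) ≠ 0 := X_ne_zero
  simp only [airyTerm, map_add, map_sub, map_mul, map_pow, algebraMap_C, algebraMap_X, map_div₀,
    map_one, map_ofNat]
  field_simp
  ring

theorem coeff_coe_airyTerm_neg_one (h2 : (2 : K) ≠ 0) {u b c v : K}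
    (hu : u ≠ 0) (hb : b ≠ 0) (hc : c ≠ 0) (hv : v ≠ 0) :
    ((airyTerm u b c v : RatFunc K) : K⸨X⸩).coeff (-1)
      = (3 * v ^ 2 + u ^ 2) / (4 * u ^ 4 * b ^ 2 * c ^ 2 * v ^ 4) := by
  obtain ⟨P, Q, hQ, h⟩ := exists_airyTerm_eq_principalPart_add h2 hu hb hc hv
  rw [h, map_add, map_add, HahnSeries.coeff_add, HahnSeries.coeff_add, coe_C_mul_X_inv_pow,
    ← pow_one (X⁻¹ : RatFunc K), coe_C_mul_X_inv_pow,
    coeff_coe_algebraMap_div_algebraMap_of_neg hQ (by norm_num)]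
  simp

end AiryTerm

theorem airy_omega04_residue :
    ((((1 / (4 * RatFunc.X * ((Z4 3) ^ 2 - RatFunc.X ^ 2))) *
        ((1 / (2 * (Z4 1) ^ 2 * (Z4 2) ^ 2 * RatFunc.X ^ 2)) *
            (1 / ((Z4 0) - RatFunc.X) ^ 2 + 1 / ((Z4 0) + RatFunc.X) ^ 2)
         + (1 / (2 * (Z4 0) ^ 2 * (Z4 2) ^ 2 * RatFunc.X ^ 2)) *
            (1 / ((Z4 1) - RatFunc.X) ^ 2 + 1 / ((Z4 1) + RatFunc.X) ^ 2)
         + (1 / (2 * (Z4 0) ^ 2 * (Z4 1) ^ 2 * RatFunc.X ^ 2)) *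
            (1 / ((Z4 2) - RatFunc.X) ^ 2 + 1 / ((Z4 2) + RatFunc.X) ^ 2))) : RatFunc F4) :
      LaurentSeries F4).coeff (-1)
    = (3 / (4 * (ZF 0) ^ 2 * (ZF 1) ^ 2 * (ZF 2) ^ 2 * (ZF 3) ^ 2)) *
        ((ZF 0) ^ (-2 : ℤ) + (ZF 1) ^ (-2 : ℤ) + (ZF 2) ^ (-2 : ℤ) + (ZF 3) ^ (-2 : ℤ)) := by
  have hZ (i : Fin 4) : ZF i ≠ 0 :=
    (map_ne_zero_iff _ (IsFractionRing.injective _ F4)).2 (MvPolynomial.X_ne_zero i)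
  have h2 : (2 : F4) ≠ 0 := two_ne_zero
  trans ((airyTerm (ZF 0) (ZF 1) (ZF 2) (ZF 3) + airyTerm (ZF 1) (ZF 0) (ZF 2) (ZF 3)
    + airyTerm (ZF 2) (ZF 0) (ZF 1) (ZF 3) : RatFunc F4) : F4⸨X⸩).coeff (-1)
  · congr 3
    simp only [airyTerm, Z4, ZF]
    ring
  rw [map_add, map_add, HahnSeries.coeff_add, HahnSeries.coeff_add,
    coeff_coe_airyTerm_neg_one h2 (hZ 0) (hZ 1) (hZ 2) (hZ 3),
    coeff_coe_airyTerm_neg_one h2 (hZ 1) (hZ 0) (hZ 2) (hZ 3),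
    coeff_coe_airyTerm_neg_one h2 (hZ 2) (hZ 0) (hZ 1) (hZ 3)]
  have := hZ 0; have := hZ 1; have := hZ 2; have := hZ 3
  field_simp
  ring
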